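/- arXiv:2410.21468 — 2 statements merged into one kernel-verified Lean document; each statement's English description precedes it below -/
import Mathlib

section
/- Suppose a graph G admits a proper vertex coloring c and G contains an induced cycle (hole) of odd length n ≥ 7 in its complement, i.e., G contains an antihole A of odd size n ≥ 7. If G has the property that every induced 4-cycle receives at most two colors under c, and colors behave 'intervally' on antiholes (any vertex whose color lies strictly between the colors of two adjacent antihole vertices is adjacent to both), then a contradiction arises: G contains a 4-hole with three colors. Consequently, the Hilbert extender graph of an interval order contains no odd antihole of size at least 7. -/
/-- Abstract antihole argument: if a graph `G` has a proper coloring `c`, contains an odd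
antihole of size `n ≥ 7` (an induced complement-cycle `f`), every induced 4-cycle of `G`
receives at most two colors, and colors behave intervally on the antihole (any vertex
whose color lies strictly between the colors of two adjacent antihole vertices is
adjacent to both), then a contradiction arises. -/
theorem stmt_17 {V : Type*} (G : SimpleGraph V) (c : V → ℕ)
    (hproper : ∀ u v : V, G.Adj u v → c u ≠ c v)
    (n : ℕ) (hodd : Odd n) (hn : 7 ≤ n)
    (f : ZMod n → V) (hinj : Function.Injective f)
    (hanti : ∀ i j : ZMod n, i ≠ j →
      (G.Adj (f i) (f j) ↔ ¬ (j = i + 1 ∨ i = j + 1)))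
    (h4cyc : ∀ g : ZMod 4 → V, Function.Injective g →
      (∀ i j : ZMod 4, i ≠ j → (G.Adj (g i) (g j) ↔ (j = i + 1 ∨ i = j + 1))) →
      (Set.range fun i => c (g i)).ncard ≤ 2)
    (hinterval : ∀ i j : ZMod n, ∀ v : V, G.Adj (f i) (f j) →
      c (f i) < c v → c v < c (f j) → G.Adj v (f i) ∧ G.Adj v (f j)) :
    False := by
  haveI : NeZero n := ⟨by omega⟩
  -- distinct small numerals in `ZMod n`
  have hneN : ∀ a b : ℕ, a < 7 → b < 7 → a ≠ b → ((a : ZMod n) ≠ (b : ZMod n)) := by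
    intro a b ha hb hab he
    have h1 := ZMod.val_cast_of_lt (show a < n by omega)
    have h2 := ZMod.val_cast_of_lt (show b < n by omega)
    rw [he] at h1
    omega
  have e10 : (1 : ZMod n) ≠ 0 := by exact_mod_cast hneN 1 0 (by norm_num) (by norm_num) (by norm_num)
  have e20 : (2 : ZMod n) ≠ 0 := by exact_mod_cast hneN 2 0 (by norm_num) (by norm_num) (by norm_num)
  have e30 : (3 : ZMod n) ≠ 0 := by exact_mod_cast hneN 3 0 (by norm_num) (by norm_num) (by norm_num)
  have e40 : (4 : ZMod n) ≠ 0 := by exact_mod_cast hneN 4 0 (by norm_num) (by norm_num) (by norm_num)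
  have e50 : (5 : ZMod n) ≠ 0 := by exact_mod_cast hneN 5 0 (by norm_num) (by norm_num) (by norm_num)
  have e21 : (2 : ZMod n) ≠ 1 := by exact_mod_cast hneN 2 1 (by norm_num) (by norm_num) (by norm_num)
  have e31 : (3 : ZMod n) ≠ 1 := by exact_mod_cast hneN 3 1 (by norm_num) (by norm_num) (by norm_num)
  have e41 : (4 : ZMod n) ≠ 1 := by exact_mod_cast hneN 4 1 (by norm_num) (by norm_num) (by norm_num)
  have e32 : (3 : ZMod n) ≠ 2 := by exact_mod_cast hneN 3 2 (by norm_num) (by norm_num) (by norm_num)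
  have e42 : (4 : ZMod n) ≠ 2 := by exact_mod_cast hneN 4 2 (by norm_num) (by norm_num) (by norm_num)
  have e14 : (1 : ZMod n) ≠ 4 := by exact_mod_cast hneN 1 4 (by norm_num) (by norm_num) (by norm_num)
  have e15 : (1 : ZMod n) ≠ 5 := by exact_mod_cast hneN 1 5 (by norm_num) (by norm_num) (by norm_num)
  have e34 : (3 : ZMod n) ≠ 4 := by exact_mod_cast hneN 3 4 (by norm_num) (by norm_num) (by norm_num)
  have e03 : (0 : ZMod n) ≠ 3 := fun h => e30 h.symm
  -- every two consecutive antihole vertices get the same color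
  have step : ∀ i : ZMod n, c (f i) = c (f (i + 1)) := by
    intro i
    by_contra hne01
    -- distinctness of the four indices
    have d03 : i ≠ i + 3 := fun h => e30 (left_eq_add.mp h)
    have d04 : i ≠ i + 4 := fun h => e40 (left_eq_add.mp h)
    have d01 : i ≠ i + 1 := fun h => e10 (left_eq_add.mp h)
    have d05 : i ≠ i + 5 := fun h => e50 (left_eq_add.mp h)
    have d13 : i + 1 ≠ i + 3 := fun h => e31 (add_left_cancel h).symm
    have d14 : i + 1 ≠ i + 4 := fun h => e41 (add_left_cancel h).symm
    have d15 : i + 1 ≠ i + 5 := fun h => e15 (add_left_cancel h)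
    have d34 : i + 3 ≠ i + 4 := fun h => e34 (add_left_cancel h)
    have d31 : i + 3 ≠ i + 1 := fun h => e31 (add_left_cancel h)
    have d41 : i + 4 ≠ i + 1 := fun h => e41 (add_left_cancel h)
    have d42 : i + 4 ≠ i + 2 := fun h => e42 (add_left_cancel h)
    -- adjacency facts
    have A1 : G.Adj (f i) (f (i + 3)) := by
      rw [hanti i (i + 3) d03]
      rintro (h | h)
      · exact d31 h
      · rw [show i + 3 + 1 = i + 4 from by ring] at h; exact d04 h
    have A2 : G.Adj (f (i + 3)) (f (i + 1)) := by
      rw [hanti (i + 3) (i + 1) d31]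
      rintro (h | h)
      · rw [show i + 3 + 1 = i + 4 from by ring] at h; exact d41 h.symm
      · rw [show i + 1 + 1 = i + 2 from by ring] at h; exact e32 (add_left_cancel h)
    have A3 : G.Adj (f (i + 1)) (f (i + 4)) := by
      rw [hanti (i + 1) (i + 4) d14]
      rintro (h | h)
      · rw [show i + 1 + 1 = i + 2 from by ring] at h; exact d42 h
      · rw [show i + 4 + 1 = i + 5 from by ring] at h; exact d15 h
    have A4 : G.Adj (f (i + 4)) (f i) := by
      rw [hanti (i + 4) i (fun h => d04 h.symm)]
      rintro (h | h)
      · rw [show i + 4 + 1 = i + 5 from by ring] at h; exact d05 h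
      · exact d41 h
    have NA1 : ¬ G.Adj (f i) (f (i + 1)) := by
      rw [hanti i (i + 1) d01]
      intro h; exact h (Or.inl rfl)
    have NA2 : ¬ G.Adj (f (i + 3)) (f (i + 4)) := by
      rw [hanti (i + 3) (i + 4) d34]
      intro h
      exact h (Or.inl (by ring))
    -- the 4-cycle
    set g : ZMod 4 → V := ![f i, f (i + 3), f (i + 1), f (i + 4)] with hg
    have hginj : Function.Injective g := by
      intro a b hab
      fin_cases a <;> fin_cases b <;>
        first
          | rfl
          | exact absurd (hinj hab) d03
          | exact absurd (hinj hab) d01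
          | exact absurd (hinj hab) d04
          | exact absurd (hinj hab) d13
          | exact absurd (hinj hab) d14
          | exact absurd (hinj hab) d34
          | exact absurd (hinj hab).symm d03
          | exact absurd (hinj hab).symm d01
          | exact absurd (hinj hab).symm d04
          | exact absurd (hinj hab).symm d13
          | exact absurd (hinj hab).symm d14
          | exact absurd (hinj hab).symm d34
    have hgcyc : ∀ a b : ZMod 4, a ≠ b →
        (G.Adj (g a) (g b) ↔ (b = a + 1 ∨ a = b + 1)) := by
      have z1 : ¬((2 : ZMod 4) = 0 + 1 ∨ (0 : ZMod 4) = 2 + 1) := by decide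
      have z2 : ¬((0 : ZMod 4) = 2 + 1 ∨ (2 : ZMod 4) = 0 + 1) := by decide
      have z3 : ¬((3 : ZMod 4) = 1 + 1 ∨ (1 : ZMod 4) = 3 + 1) := by decide
      have z4 : ¬((1 : ZMod 4) = 3 + 1 ∨ (3 : ZMod 4) = 1 + 1) := by decide
      intro a b hab
      fin_cases a <;> fin_cases b <;>
        (try exact absurd rfl hab) <;>
        (constructor <;> intro h <;>
          first
            | exact Or.inl rfl
            | exact Or.inr rfl
            | exact A1 | exact A2 | exact A3 | exact A4
            | exact A1.symm | exact A2.symm | exact A3.symm | exact A4.symm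
            | exact absurd h z1 | exact absurd h z2 | exact absurd h z3 | exact absurd h z4
            | exact absurd h NA1 | exact absurd h NA2
            | exact absurd h.symm NA1 | exact absurd h.symm NA2)
    have hle := h4cyc g hginj hgcyc
    -- but the cycle sees at least three colors
    have hsub : ({c (f i), c (f (i + 3)), c (f (i + 1))} : Set ℕ) ⊆
        Set.range fun a => c (g a) := by
      rintro x (rfl | rfl | rfl)
      · exact ⟨0, rfl⟩
      · exact ⟨1, rfl⟩
      · exact ⟨2, rfl⟩
    have hcard : ({c (f i), c (f (i + 3)), c (f (i + 1))} : Set ℕ).ncard = 3 :=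
      Set.ncard_eq_three.mpr ⟨_, _, _, hproper _ _ A1, hne01,
        hproper _ _ A2, rfl⟩
    have := Set.ncard_le_ncard hsub (Set.finite_range _)
    omega
  -- hence the color is constant on the antihole, contradicting properness on an edge
  have h02 : G.Adj (f 0) (f 2) := by
    rw [hanti 0 2 (fun h => e20 h.symm)]
    rintro (h | h)
    · exact e21 (by simpa using h)
    · rw [show (2 : ZMod n) + 1 = 3 from by norm_num] at h; exact e03 h
  have hc01 := step 0
  have hc12 := step 1
  rw [zero_add] at hc01
  rw [show (1 : ZMod n) + 1 = 2 from by norm_num] at hc12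
  exact hproper _ _ h02 (hc01.trans hc12)
end

section
/- The Hilbert extender graph of any interval order is a Berge graph: it contains no odd hole of length at least 5 and no odd antihole of size at least 7 (hence, by the strong perfect graph theorem, it is a perfect graph). -/
/-- The recession cone `Q*_P` of the length polyhedron: differences of length vectors of
real representations (with `r x + 1 ≤ l y` whenever `x < y`) from the canonical length
vector given by `lc, rc`. -/
def Qstar {α : Type*} [PartialOrder α] (lc rc : α → ℕ) : Set (α → ℝ) :=
  {ρ | ∃ l r : α → ℝ, (∀ x, l x ≤ r x) ∧
    (∀ x y : α, x < y → r x + 1 ≤ l y) ∧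
    (∀ x y : α, r x < l y → x < y) ∧
    ∀ x, ρ x = (r x - l x) - ((rc x : ℝ) - (lc x : ℝ))}

/-- `H` is an integral Hilbert basis for `C`: a finite set of integral vectors of `C`
such that every integral vector of `C` is a nonnegative integral combination of them. -/
def IsHilbertBasis {α : Type*} (C H : Set (α → ℝ)) : Prop :=
  H.Finite ∧ H ⊆ C ∧ (∀ h ∈ H, ∀ x, ∃ z : ℤ, h x = (z : ℝ)) ∧
  ∀ v ∈ C, (∀ x, ∃ z : ℤ, v x = (z : ℝ)) →
    ∃ (T : Finset (α → ℝ)) (c : (α → ℝ) → ℕ), ↑T ⊆ H ∧ v = ∑ h ∈ T, (c h : ℝ) • h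

/-- A minimal integral Hilbert basis: no proper subset is a Hilbert basis. -/
def IsMinimalHilbertBasis {α : Type*} (C H : Set (α → ℝ)) : Prop :=
  IsHilbertBasis C H ∧ ∀ H' ⊆ H, IsHilbertBasis C H' → H' = H

/-- Characteristic vector of a subset. -/
noncomputable def chiVec {α : Type*} (S : Set α) : α → ℝ := S.indicator 1

/-- The `i`th gap set: elements whose canonical interval contains `[i−1, i]`. -/
def gapSet {α : Type*} (lc rc : α → ℕ) (i : ℕ) : Set α :=
  {x | lc x + 1 ≤ i ∧ i ≤ rc x}

/-- The `i`th left-borderline set: elements with canonical right endpoint `i − 1`. -/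
def leftBorder {α : Type*} (rc : α → ℕ) (i : ℕ) : Set α := {x | rc x + 1 = i}

/-- The `i`th right-borderline set: elements with canonical left endpoint `i`. -/
def rightBorder {α : Type*} (lc : α → ℕ) (i : ℕ) : Set α := {x | lc x = i}

/-- A fundamental extender: a nonempty set of the form `G i ∪ Z` with `Z` contained in
the left or right borderline set of the `(i−1,i)`-gap. -/
def FundExt {α : Type*} (m : ℕ) (lc rc : α → ℕ) (S : Set α) : Prop :=
  S.Nonempty ∧ ∃ i ≤ m, ∃ Z : Set α,
    (Z ⊆ leftBorder rc i ∨ Z ⊆ rightBorder lc i) ∧ S = gapSet lc rc i ∪ Z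

/-- A Hilbert set: a fundamental extender whose characteristic vector belongs to the
unique minimal integral Hilbert basis of `Q*_P`. -/
def HilbertSet {α : Type*} [PartialOrder α] (m : ℕ) (lc rc : α → ℕ) (S : Set α) : Prop :=
  FundExt m lc rc S ∧
  ∃ H : Set (α → ℝ), IsMinimalHilbertBasis (Qstar lc rc) H ∧ chiVec S ∈ H

lemma chiVec_apply {α : Type*} (S : Set α) (x : α) [Decidable (x ∈ S)] :
    chiVec S x = if x ∈ S then 1 else 0 := by
  simp [chiVec, Set.indicator_apply]

/-- Nonnegativity of vectors in `Q*`. -/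
lemma qstar_nonneg {α : Type*} [PartialOrder α] (m : ℕ) (lc rc : α → ℕ)
    (hclr : ∀ x, lc x ≤ rc x) (hcrep : ∀ x y : α, x < y ↔ rc x + 1 ≤ lc y)
    (hcm : ∀ x, rc x < m) (hcan : ∀ i < m, (∃ x, lc x = i) ∧ (∃ x, rc x = i))
    {ρ : α → ℝ} (hρ : ρ ∈ Qstar lc rc) (x : α) : 0 ≤ ρ x := by
  classical
  obtain ⟨l, r, h1, h2, h3, h4⟩ := hρ
  -- choice functions for canonical witnesses
  have hA : ∀ j, j < m → ∃ a : α, rc a = j := fun j hj => (hcan j hj).2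
  have hB : ∀ j, j < m → ∃ b : α, lc b = j := fun j hj => (hcan j hj).1
  set A : ℕ → α := fun j => if h : j < m then (hA j h).choose else x with hAdef
  set B : ℕ → α := fun j => if h : j < m then (hB j h).choose else x with hBdef
  have hAspec : ∀ j, j < m → rc (A j) = j := by
    intro j hj; simp only [hAdef, dif_pos hj]; exact (hA j hj).choose_spec
  have hBspec : ∀ j, j < m → lc (B j) = j := by
    intro j hj; simp only [hBdef, dif_pos hj]; exact (hB j hj).choose_spec
  -- if the canonical interval is a point, trivial
  rcases Nat.eq_or_lt_of_le (hclr x) with heq | hlt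
  · have := h1 x
    rw [h4 x, ← heq]
    simp; linarith
  · -- the chain argument
    have hxm := hcm x
    have key : ∀ k : ℕ, lc x + 1 + k ≤ rc x → l x + (k : ℝ) ≤ r (A (lc x + k)) := by
      intro k
      induction k with
      | zero =>
        intro _
        have hv : lc x < m := by omega
        have ha := hAspec (lc x) hv
        have hnlt : ¬ (A (lc x) < x) := by
          rw [hcrep]; omega
        have h5 : l x ≤ r (A (lc x)) := not_lt.mp (fun hc => hnlt (h3 _ _ hc))
        simpa using h5
      | succ k ih =>
        intro hk
        have hk' : lc x + 1 + k ≤ rc x := by omega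
        have ihr := ih hk'
        set j := lc x + k + 1 with hj
        have hjm : j < m := by omega
        have hjm' : lc x + k < m := by omega
        have hb := hBspec j hjm
        have ha' := hAspec j hjm
        have ha := hAspec (lc x + k) hjm'
        -- A (lc x + k) < B j
        have hlt1 : A (lc x + k) < B j := by rw [hcrep]; omega
        have e1 := h2 _ _ hlt1
        -- ¬ (A j < B j)
        have hnlt2 : ¬ (A j < B j) := by rw [hcrep, ha', hb]; omega
        have e2 : l (B j) ≤ r (A j) := not_lt.mp (fun hc => hnlt2 (h3 _ _ hc))
        have : lc x + (k+1) = j := by omega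
        rw [this]
        push_cast
        push_cast at ihr
        linarith only [ihr, e1, e2]
    have hk0 : lc x + 1 + (rc x - lc x - 1) ≤ rc x := by omega
    have hkey := key _ hk0
    have hrxm : rc x < m := hcm x
    obtain ⟨q, hq⟩ : ∃ q, q = rc x - 1 := ⟨_, rfl⟩
    have heA : lc x + (rc x - lc x - 1) = q := by omega
    rw [heA] at hkey
    have hrx1 : q < m := by omega
    have ha := hAspec q hrx1
    have hb := hBspec (rc x) hrxm
    have hlt1 : A q < B (rc x) := by rw [hcrep, ha, hb]; omega
    have e1 := h2 _ _ hlt1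
    have hnlt2 : ¬ (x < B (rc x)) := by rw [hcrep]; omega
    have e2 : l (B (rc x)) ≤ r x := not_lt.mp (fun hc => hnlt2 (h3 _ _ hc))
    rw [h4 x]
    have hc : ((rc x - lc x - 1 : ℕ) : ℝ) = (rc x : ℝ) - (lc x : ℝ) - 1 := by
      rw [Nat.cast_sub (by omega : 1 ≤ rc x - lc x), Nat.cast_sub (hclr x)]
      push_cast; ring
    rw [hc] at hkey
    linarith only [hkey, e1, e2]

/-- Characteristic vectors of fundamental extenders belong to `Q*`. -/
lemma fundext_chi_mem {α : Type*} [PartialOrder α] (m : ℕ) (lc rc : α → ℕ)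
    (hclr : ∀ x, lc x ≤ rc x) (hcrep : ∀ x y : α, x < y ↔ rc x + 1 ≤ lc y)
    {S : Set α} (hS : FundExt m lc rc S) : chiVec S ∈ Qstar lc rc := by
  classical
  obtain ⟨hne, i, him, Z, hside, hrep⟩ := hS
  have hmem : ∀ x, x ∈ S ↔ ((lc x + 1 ≤ i ∧ i ≤ rc x) ∨ x ∈ Z) := by
    intro x; rw [hrep]; simp [gapSet]
  rcases hside with hL | hR
  · -- left borderline case : rc x + 1 = i on Z
    have hz : ∀ x, x ∈ Z → rc x + 1 = i := fun x h => hL h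
    refine ⟨fun x => ((lc x + (if i ≤ lc x then 1 else 0) : ℕ) : ℝ),
      fun x => ((rc x + (if i ≤ rc x ∨ x ∈ Z then 1 else 0) : ℕ) : ℝ), ?_, ?_, ?_, ?_⟩
    · intro x
      have hc := hclr x
      have hzx := hz x
      refine Nat.cast_le.mpr ?_
      by_cases h1 : i ≤ lc x <;> by_cases h2 : i ≤ rc x <;> by_cases h3 : x ∈ Z <;>
        simp [h1, h2, h3] <;> omega
    · intro x y hxy
      have hxy' := (hcrep x y).1 hxy
      have hzx := hz x
      have hcx := hclr x; have hcy := hclr y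
      have key : (rc x + (if i ≤ rc x ∨ x ∈ Z then 1 else 0)) + 1
          ≤ lc y + (if i ≤ lc y then 1 else 0) := by
        by_cases h1 : i ≤ rc x
        · rw [if_pos (Or.inl h1), if_pos (by omega)]; omega
        · by_cases h2 : x ∈ Z
          · have hb := hzx h2
            rw [if_pos (Or.inr h2), if_pos (by omega)]; omega
          · rw [if_neg (not_or.mpr ⟨h1, h2⟩)]
            by_cases h3 : i ≤ lc y
            · rw [if_pos h3]; omega
            · rw [if_neg h3]; omega
      calc ((rc x + (if i ≤ rc x ∨ x ∈ Z then 1 else 0) : ℕ) : ℝ) + 1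
          = ((rc x + (if i ≤ rc x ∨ x ∈ Z then 1 else 0) + 1 : ℕ) : ℝ) := by push_cast; ring
        _ ≤ _ := Nat.cast_le.mpr key
    · intro x y hlt
      rw [hcrep]
      by_contra hn
      have hn' : lc y ≤ rc x := by omega
      have hcx := hclr x; have hcy := hclr y
      have key : lc y + (if i ≤ lc y then 1 else 0)
          ≤ rc x + (if i ≤ rc x ∨ x ∈ Z then 1 else 0) := by
        by_cases h1 : i ≤ lc y <;> by_cases h2 : i ≤ rc x <;> by_cases h3 : x ∈ Z <;>
          simp [h1, h2, h3] <;> omega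
      exact absurd hlt (not_lt.mpr (Nat.cast_le.mpr key))
    · intro x
      have hzx := hz x
      have hcx := hclr x
      by_cases hx : x ∈ S
      · have h1 : chiVec S x = 1 := by simp [chiVec, hx]
        have hOr := (hmem x).1 hx
        have key : (rc x + (if i ≤ rc x ∨ x ∈ Z then 1 else 0)) + lc x
            = rc x + (lc x + (if i ≤ lc x then 1 else 0)) + 1 := by
          rcases hOr with ⟨hg1, hg2⟩ | h4
          · rw [if_pos (Or.inl hg2), if_neg (by omega : ¬ i ≤ lc x)]; omega
          · have hb := hzx h4
            rw [if_pos (Or.inr h4), if_neg (by omega : ¬ i ≤ lc x)]; omega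
        have key' := congrArg (fun n : ℕ => (n : ℝ)) key
        push_cast at key'
        rw [h1]; dsimp only; push_cast; linarith [key']
      · have h1 : chiVec S x = 0 := by simp [chiVec, hx]
        have hOr : ¬ ((lc x + 1 ≤ i ∧ i ≤ rc x) ∨ x ∈ Z) := fun h => hx ((hmem x).2 h)
        push_neg at hOr
        obtain ⟨hg, hnz⟩ := hOr
        have key : (rc x + (if i ≤ rc x ∨ x ∈ Z then 1 else 0)) + lc x
            = rc x + (lc x + (if i ≤ lc x then 1 else 0)) := by
          by_cases h3 : i ≤ rc x
          · have h2 : i ≤ lc x := by by_contra hh; have h5 := hg (by omega); omega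
            rw [if_pos (Or.inl h3), if_pos h2]; omega
          · rw [if_neg (not_or.mpr ⟨h3, hnz⟩), if_neg (by omega : ¬ i ≤ lc x)]; omega
        have key' := congrArg (fun n : ℕ => (n : ℝ)) key
        push_cast at key'
        rw [h1]; dsimp only; push_cast; linarith [key']
  · -- right borderline case : lc x = i on Z
    have hz : ∀ x, x ∈ Z → lc x = i := fun x h => hR h
    refine ⟨fun x => ((lc x + (if i ≤ lc x ∧ x ∉ Z then 1 else 0) : ℕ) : ℝ),
      fun x => ((rc x + (if i ≤ rc x then 1 else 0) : ℕ) : ℝ), ?_, ?_, ?_, ?_⟩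
    · intro x
      have hc := hclr x
      have hzx := hz x
      refine Nat.cast_le.mpr ?_
      by_cases h1 : i ≤ lc x <;> by_cases h2 : i ≤ rc x <;> by_cases h3 : x ∈ Z <;>
        simp [h1, h2, h3] <;> omega
    · intro x y hxy
      have hxy' := (hcrep x y).1 hxy
      have hzy := hz y
      have hcx := hclr x; have hcy := hclr y
      have key : (rc x + (if i ≤ rc x then 1 else 0)) + 1
          ≤ lc y + (if i ≤ lc y ∧ y ∉ Z then 1 else 0) := by
        by_cases h2 : y ∈ Z
        · have hb := hzy h2
          have h1 : ¬ i ≤ rc x := by omega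
          rw [if_neg h1, if_neg (fun hh => hh.2 h2)]; omega
        · by_cases h1 : i ≤ rc x
          · rw [if_pos h1, if_pos ⟨by omega, h2⟩]; omega
          · rw [if_neg h1]
            by_cases h3 : i ≤ lc y
            · rw [if_pos ⟨h3, h2⟩]; omega
            · rw [if_neg (fun hh => h3 hh.1)]; omega
      calc ((rc x + (if i ≤ rc x then 1 else 0) : ℕ) : ℝ) + 1
          = ((rc x + (if i ≤ rc x then 1 else 0) + 1 : ℕ) : ℝ) := by push_cast; ring
        _ ≤ _ := Nat.cast_le.mpr key
    · intro x y hlt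
      rw [hcrep]
      by_contra hn
      have hn' : lc y ≤ rc x := by omega
      have hzy := hz y
      have hcx := hclr x; have hcy := hclr y
      have key : lc y + (if i ≤ lc y ∧ y ∉ Z then 1 else 0)
          ≤ rc x + (if i ≤ rc x then 1 else 0) := by
        by_cases h1 : i ≤ lc y <;> by_cases h2 : i ≤ rc x <;> by_cases h3 : y ∈ Z <;>
          simp [h1, h2, h3] <;> omega
      exact absurd hlt (not_lt.mpr (Nat.cast_le.mpr key))
    · intro x
      have hzx := hz x
      have hcx := hclr x
      by_cases hx : x ∈ S
      · have h1 : chiVec S x = 1 := by simp [chiVec, hx]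
        have hOr := (hmem x).1 hx
        have key : (rc x + (if i ≤ rc x then 1 else 0)) + lc x
            = rc x + (lc x + (if i ≤ lc x ∧ x ∉ Z then 1 else 0)) + 1 := by
          rcases hOr with ⟨hg1, hg2⟩ | h4
          · rw [if_pos hg2, if_neg (fun hh => absurd hh.1 (by omega))]; omega
          · have hb := hzx h4
            rw [if_pos (by omega : i ≤ rc x), if_neg (fun hh => hh.2 h4)]; omega
        have key' := congrArg (fun n : ℕ => (n : ℝ)) key
        push_cast at key'
        rw [h1]; dsimp only; push_cast; linarith [key']
      · have h1 : chiVec S x = 0 := by simp [chiVec, hx]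
        have hOr : ¬ ((lc x + 1 ≤ i ∧ i ≤ rc x) ∨ x ∈ Z) := fun h => hx ((hmem x).2 h)
        push_neg at hOr
        obtain ⟨hg, hnz⟩ := hOr
        have key : (rc x + (if i ≤ rc x then 1 else 0)) + lc x
            = rc x + (lc x + (if i ≤ lc x ∧ x ∉ Z then 1 else 0)) := by
          by_cases h3 : i ≤ rc x
          · have h2 : i ≤ lc x := by by_contra hh; have h5 := hg (by omega); omega
            rw [if_pos h3, if_pos ⟨h2, hnz⟩]; omega
          · rw [if_neg h3, if_neg (fun hh => absurd hh.1 (by omega))]; omega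
        have key' := congrArg (fun n : ℕ => (n : ℝ)) key
        push_cast at key'
        rw [h1]; dsimp only; push_cast; linarith [key']

/-- Members of a minimal Hilbert basis are irreducible. -/
lemma hilbert_irred {α : Type*} [Fintype α] [PartialOrder α] (m : ℕ) (lc rc : α → ℕ)
    (hclr : ∀ x, lc x ≤ rc x) (hcrep : ∀ x y : α, x < y ↔ rc x + 1 ≤ lc y)
    (hcm : ∀ x, rc x < m) (hcan : ∀ i < m, (∃ x, lc x = i) ∧ (∃ x, rc x = i))
    {S : Set α} (hS : HilbertSet m lc rc S) {v w : α → ℝ}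
    (hv : v ∈ Qstar lc rc) (hw : w ∈ Qstar lc rc)
    (hvi : ∀ x, ∃ z : ℤ, v x = (z : ℝ)) (hwi : ∀ x, ∃ z : ℤ, w x = (z : ℝ))
    (hv0 : v ≠ 0) (hw0 : w ≠ 0) : chiVec S ≠ v + w := by
  classical
  intro hEq
  obtain ⟨hFE, H, ⟨⟨hfin, hsub, hint, hgen⟩, hmin⟩, hmemH⟩ := hS
  set h : α → ℝ := chiVec S with hh
  set H' : Set (α → ℝ) := H \ {h} with hH'
  -- basic positivity facts
  have hNN : ∀ g ∈ H, ∀ x, 0 ≤ g x := fun g hg x =>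
    qstar_nonneg m lc rc hclr hcrep hcm hcan (hsub hg) x
  have hsum_pos : ∀ u : α → ℝ, u ∈ Qstar lc rc → (∀ x, ∃ z : ℤ, u x = (z : ℝ)) →
      u ≠ 0 → (1 : ℝ) ≤ ∑ x, u x := by
    intro u hu hui hu0
    have hx0 : ∃ x, u x ≠ 0 := by
      by_contra hc; push_neg at hc; exact hu0 (funext hc)
    obtain ⟨x0, hx0⟩ := hx0
    have h1 : (1 : ℝ) ≤ u x0 := by
      obtain ⟨z, hz⟩ := hui x0
      have h2 : 0 ≤ u x0 := qstar_nonneg m lc rc hclr hcrep hcm hcan hu x0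
      rw [hz] at h2 hx0 ⊢
      have hz0 : z ≠ 0 := fun hc => hx0 (by rw [hc]; simp)
      have : (1 : ℤ) ≤ z := by
        have : (0:ℤ) ≤ z := by exact_mod_cast h2
        omega
      exact_mod_cast this
    calc (1:ℝ) ≤ u x0 := h1
      _ ≤ ∑ x, u x := Finset.single_le_sum
          (fun i _ => qstar_nonneg m lc rc hclr hcrep hcm hcan hu i) (Finset.mem_univ x0)
  have hSv := hsum_pos v hv hvi hv0
  have hSw := hsum_pos w hw hwi hw0
  have hSh : (2:ℝ) ≤ ∑ x, h x := by
    have : ∑ x, h x = (∑ x, v x) + ∑ x, w x := by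
      rw [← Finset.sum_add_distrib]
      exact Finset.sum_congr rfl fun x _ => by rw [hEq]; rfl
    linarith
  -- combinations over H' are closed under addition
  have addCombo : ∀ u1 u2 : α → ℝ,
      (∃ (T : Finset (α → ℝ)) (c : (α → ℝ) → ℕ), ↑T ⊆ H' ∧ u1 = ∑ g ∈ T, (c g : ℝ) • g) →
      (∃ (T : Finset (α → ℝ)) (c : (α → ℝ) → ℕ), ↑T ⊆ H' ∧ u2 = ∑ g ∈ T, (c g : ℝ) • g) →
      (∃ (T : Finset (α → ℝ)) (c : (α → ℝ) → ℕ), ↑T ⊆ H' ∧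
        u1 + u2 = ∑ g ∈ T, (c g : ℝ) • g) := by
    rintro u1 u2 ⟨T1, c1, hT1, he1⟩ ⟨T2, c2, hT2, he2⟩
    refine ⟨T1 ∪ T2, fun g => (if g ∈ T1 then c1 g else 0) + (if g ∈ T2 then c2 g else 0),
      ?_, ?_⟩
    · rw [Finset.coe_union]; exact Set.union_subset hT1 hT2
    · have key : ∀ (T1 T2 : Finset (α → ℝ)) (c1 : (α → ℝ) → ℕ),
          ∑ g ∈ T1 ∪ T2, ((if g ∈ T1 then c1 g else 0 : ℕ) : ℝ) • g
            = ∑ g ∈ T1, (c1 g : ℝ) • g := by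
        intro T1 T2 c1
        have : ∀ g, ((if g ∈ T1 then c1 g else 0 : ℕ) : ℝ) • g
            = if g ∈ T1 then (c1 g : ℝ) • g else 0 := by
          intro g; split_ifs <;> simp
        rw [Finset.sum_congr rfl fun g _ => this g, Finset.sum_ite_mem,
          Finset.union_inter_cancel_left]
      calc u1 + u2 = (∑ g ∈ T1, (c1 g : ℝ) • g) + ∑ g ∈ T2, (c2 g : ℝ) • g := by
            rw [he1, he2]
        _ = (∑ g ∈ T1 ∪ T2, ((if g ∈ T1 then c1 g else 0 : ℕ) : ℝ) • g)
            + ∑ g ∈ T1 ∪ T2, ((if g ∈ T2 then c2 g else 0 : ℕ) : ℝ) • g := by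
            rw [key T1 T2 c1]
            congr 1
            rw [Finset.union_comm]
            exact (key T2 T1 c2).symm
        _ = _ := by
            rw [← Finset.sum_add_distrib]
            exact Finset.sum_congr rfl fun g _ => by push_cast; rw [add_smul]
  -- main claim: anything generated by H is generated by H'
  have key : ∀ N : ℕ, ∀ u : α → ℝ, ∀ T : Finset (α → ℝ), ∀ c : (α → ℝ) → ℕ,
      ↑T ⊆ H → u = ∑ g ∈ T, (c g : ℝ) • g → (∑ x, u x) ≤ (N : ℝ) →
      ∃ (T' : Finset (α → ℝ)) (c' : (α → ℝ) → ℕ), ↑T' ⊆ H' ∧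
        u = ∑ g ∈ T', (c' g : ℝ) • g := by
    intro N
    induction N using Nat.strong_induction_on with
    | _ N IH =>
      intro u T c hTH hu hsum
      by_cases hhT : h ∈ T
      · by_cases hch : c h = 0
        · refine ⟨T.erase h, c, ?_, ?_⟩
          · intro g hg
            rw [Finset.coe_erase] at hg
            exact ⟨hTH hg.1, hg.2⟩
          · rw [hu, ← Finset.sum_erase_add T _ hhT, hch]
            simp
        · -- c h ≥ 1 : peel one copy of h = v + w off
          have hch1 : 1 ≤ c h := Nat.one_le_iff_ne_zero.2 hch
          set c2 : (α → ℝ) → ℕ := fun g => if g = h then c h - 1 else c g with hc2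
          set u2 : α → ℝ := u - h with hu2def
          have hcast : ((c h - 1 : ℕ) : ℝ) = (c h : ℝ) - 1 := by
            rw [Nat.cast_sub hch1]; norm_num
          have hu2 : u2 = ∑ g ∈ T, (c2 g : ℝ) • g := by
            have e1 : ∑ g ∈ T, (c2 g : ℝ) • g
                = (∑ g ∈ T.erase h, (c2 g : ℝ) • g) + (c2 h : ℝ) • h :=
              (Finset.sum_erase_add T _ hhT).symm
            have e2 : ∑ g ∈ T.erase h, (c2 g : ℝ) • g = ∑ g ∈ T.erase h, (c g : ℝ) • g :=
              Finset.sum_congr rfl fun g hg => by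
                rw [hc2]; simp only [if_neg (Finset.ne_of_mem_erase hg)]
            have e3 : u = (∑ g ∈ T.erase h, (c g : ℝ) • g) + (c h : ℝ) • h := by
              rw [hu, Finset.sum_erase_add T _ hhT]
            have e4 : (c2 h : ℝ) = (c h : ℝ) - 1 := by rw [hc2]; simp [hcast]
            rw [hu2def, e1, e2, e4, e3, sub_smul, one_smul]
            abel
          have hu2nn : ∀ x, 0 ≤ u2 x := by
            intro x
            rw [hu2]
            have : (∑ g ∈ T, (c2 g : ℝ) • g) x = ∑ g ∈ T, (c2 g : ℝ) * g x := by
              rw [Finset.sum_apply]; rfl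
            rw [this]
            exact Finset.sum_nonneg fun g hg =>
              mul_nonneg (Nat.cast_nonneg _) (hNN g (hTH hg) x)
          have hSu2 : ∑ x, u2 x = (∑ x, u x) - ∑ x, h x := by
            rw [hu2def]
            rw [← Finset.sum_sub_distrib]; rfl
          have hSu2nn : 0 ≤ ∑ x, u2 x := Finset.sum_nonneg fun x _ => hu2nn x
          have hN2 : 2 ≤ N := by
            have : (2:ℝ) ≤ (N:ℝ) := by linarith
            exact_mod_cast this
          -- decompose v, w, u2 over H'
          obtain ⟨Tv, cv, hTv, hev⟩ := hgen v hv hvi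
          obtain ⟨Tw, cw, hTw, hew⟩ := hgen w hw hwi
          have hSvw : (∑ x, v x) + (∑ x, w x) = ∑ x, h x := by
            rw [← Finset.sum_add_distrib]
            exact Finset.sum_congr rfl fun x _ => by rw [hEq]; rfl
          have dv := IH (N - 1) (by omega) v Tv cv hTv hev
            (by push_cast [Nat.cast_sub (by omega : 1 ≤ N)]; linarith)
          have dw := IH (N - 1) (by omega) w Tw cw hTw hew
            (by push_cast [Nat.cast_sub (by omega : 1 ≤ N)]; linarith)
          have du2 := IH (N - 1) (by omega) u2 T c2 hTH hu2
            (by push_cast [Nat.cast_sub (by omega : 1 ≤ N)]; linarith)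
          have hfinal : u = (v + w) + u2 := by rw [← hEq, hu2def]; abel
          rw [hfinal]
          exact addCombo _ _ (addCombo _ _ dv dw) du2
      · refine ⟨T, c, ?_, hu⟩
        intro g hg
        exact ⟨hTH hg, fun he => hhT (by rwa [Set.mem_singleton_iff.mp he] at hg)⟩
  -- H' is a Hilbert basis, contradicting minimality
  have hH'basis : IsHilbertBasis (Qstar lc rc) H' := by
    refine ⟨hfin.subset Set.diff_subset, fun g hg => hsub hg.1, fun g hg => hint g hg.1,
      ?_⟩
    intro u hu hui
    obtain ⟨T, c, hT, he⟩ := hgen u hu hui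
    exact key ⌈∑ x, u x⌉₊ u T c hT he (Nat.le_ceil _)
  have : H' = H := hmin H' Set.diff_subset hH'basis
  rw [← this] at hmemH
  exact hmemH.2 rfl

lemma chiVec_split {α : Type*} {S A B : Set α} (hAB : S = A ∪ B)
    (hdisj : ∀ x, x ∈ A → x ∉ B) : chiVec S = chiVec A + chiVec B := by
  classical
  funext x
  rw [Pi.add_apply, chiVec_apply, chiVec_apply, chiVec_apply]
  by_cases ha : x ∈ A
  · have hb := hdisj x ha
    simp [hAB, ha, hb]
  · by_cases hb : x ∈ B <;> simp [hAB, ha, hb]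

lemma chiVec_integral {α : Type*} (S : Set α) : ∀ x, ∃ z : ℤ, chiVec S x = (z : ℝ) := by
  classical
  intro x
  rw [chiVec_apply]
  refine ⟨if x ∈ S then 1 else 0, ?_⟩
  split_ifs <;> simp

lemma chiVec_ne_zero {α : Type*} {S : Set α} {x : α} (hx : x ∈ S) : chiVec S ≠ 0 := by
  classical
  intro hc
  have := congrFun hc x
  rw [chiVec_apply, if_pos hx] at this
  simpa using this

/-- A Hilbert set whose gap set is empty must be a singleton. -/
lemma hilbert_gap_subsingleton {α : Type*} [Fintype α] [PartialOrder α] (m : ℕ)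
    (lc rc : α → ℕ)
    (hclr : ∀ x, lc x ≤ rc x) (hcrep : ∀ x y : α, x < y ↔ rc x + 1 ≤ lc y)
    (hcm : ∀ x, rc x < m) (hcan : ∀ i < m, (∃ x, lc x = i) ∧ (∃ x, rc x = i))
    {S : Set α} (hS : HilbertSet m lc rc S) {i : ℕ} {Z : Set α} (him : i ≤ m)
    (hside : Z ⊆ leftBorder rc i ∨ Z ⊆ rightBorder lc i)
    (hrep : S = gapSet lc rc i ∪ Z) (hgap : gapSet lc rc i = ∅) : S.Subsingleton := by
  classical
  intro b hb a ha
  by_contra hab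
  have hSZ : S = Z := by rw [hrep, hgap, Set.empty_union]
  have haZ : a ∈ Z := hSZ ▸ ha
  have hsplit : chiVec S = chiVec {a} + chiVec (S \ {a}) := by
    refine chiVec_split ?_ ?_
    · exact (Set.union_diff_cancel (Set.singleton_subset_iff.mpr ha)).symm
    · intro x hx hx2
      exact hx2.2 hx
  have hFA : FundExt m lc rc {a} := by
    refine ⟨⟨a, rfl⟩, i, him, {a}, ?_, ?_⟩
    · rcases hside with hL | hR
      · exact Or.inl (Set.singleton_subset_iff.mpr (hL haZ))
      · exact Or.inr (Set.singleton_subset_iff.mpr (hR haZ))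
    · rw [hgap, Set.empty_union]
  have hFB : FundExt m lc rc (S \ {a}) := by
    refine ⟨⟨b, hb, fun hc => hab (by simpa using hc)⟩, i, him, Z \ {a}, ?_, ?_⟩
    · rcases hside with hL | hR
      · exact Or.inl ((Set.diff_subset).trans hL)
      · exact Or.inr ((Set.diff_subset).trans hR)
    · rw [hgap, Set.empty_union, hSZ]
  exact hilbert_irred m lc rc hclr hcrep hcm hcan hS
    (fundext_chi_mem m lc rc hclr hcrep hFA)
    (fundext_chi_mem m lc rc hclr hcrep hFB)
    (chiVec_integral _) (chiVec_integral _)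
    (chiVec_ne_zero (Set.mem_singleton a))
    (chiVec_ne_zero (⟨hb, fun hc => hab (by simpa using hc)⟩ : b ∈ S \ {a}))
    hsplit

lemma zmod_k_ne_zero {n : ℕ} (hn : 5 ≤ n) (k : ℕ) (hk1 : 0 < k) (hk2 : k < 5) :
    ((k : ℕ) : ZMod n) ≠ 0 := by
  haveI : NeZero n := ⟨by omega⟩
  intro hc
  have hdvd := (ZMod.natCast_eq_zero_iff k n).mp hc
  have := Nat.le_of_dvd hk1 hdvd
  omega

lemma holeAux {α : Type*} {n : ℕ} (hn : 5 ≤ n) (lc rc : α → ℕ)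
    (f : ZMod n → Set α) (I : ZMod n → ℕ)
    (hW1 : ∀ v x, x ∈ f v → lc x ≤ I v ∧ I v ≤ rc x + 1)
    (hW2 : ∀ v, gapSet lc rc (I v) ⊆ f v)
    (hW3 : ∀ v, (gapSet lc rc (I v)).Nonempty)
    (hadj : ∀ u, (f u ∩ f (u + 1)).Nonempty)
    (hdisj : ∀ u w : ZMod n, u ≠ w → w ≠ u + 1 → u ≠ w + 1 → f u ∩ f w = ∅) : False := by
  haveI : NeZero n := ⟨by omega⟩
  have h1 : (1 : ZMod n) ≠ 0 := by
    have := zmod_k_ne_zero hn 1 (by norm_num) (by norm_num); simpa using this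
  have h2 : (2 : ZMod n) ≠ 0 := by
    have := zmod_k_ne_zero hn 2 (by norm_num) (by norm_num); simpa using this
  have h3 : (3 : ZMod n) ≠ 0 := by
    have := zmod_k_ne_zero hn 3 (by norm_num) (by norm_num); simpa using this
  have h4 : (4 : ZMod n) ≠ 0 := by
    have := zmod_k_ne_zero hn 4 (by norm_num) (by norm_num); simpa using this
  have hne : Nonempty (ZMod n) := ⟨0⟩
  -- equal indices imply intersection
  have hEqMeet : ∀ u w : ZMod n, I u = I w → (f u ∩ f w).Nonempty := by
    intro u w he
    obtain ⟨g, hg⟩ := hW3 u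
    exact ⟨g, hW2 u hg, hW2 w (he ▸ hg)⟩
  have hNeq : ∀ u w : ZMod n, u ≠ w → w ≠ u + 1 → u ≠ w + 1 → I u ≠ I w := by
    intro u w d1 d2 d3 he
    have h0 := hdisj u w d1 d2 d3
    obtain ⟨g, hg⟩ := hEqMeet u w he
    rw [h0] at hg
    exact hg
  -- a maximal vertex whose successor has smaller index
  obtain ⟨a0, ha0⟩ := Finite.exists_max I
  have hamax : ∃ a : ZMod n, (∀ u, I u ≤ I a) ∧ I (a + 1) < I a := by
    by_cases hc : I (a0 + 1) = I a0
    · refine ⟨a0 + 1, fun u => by rw [hc]; exact ha0 u, ?_⟩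
      have d1 : a0 ≠ a0 + 1 + 1 := fun h => h2 (by first | linear_combination h | linear_combination - h)
      have d2 : a0 + 1 + 1 ≠ a0 + 1 := fun h => h1 (by first | linear_combination h | linear_combination - h)
      have d3 : a0 ≠ a0 + 1 + 1 + 1 := fun h => h3 (by first | linear_combination h | linear_combination - h)
      have hne2 := hNeq a0 (a0 + 1 + 1) d1 d2 d3
      have hle := ha0 (a0 + 1 + 1)
      omega
    · exact ⟨a0, ha0, lt_of_le_of_ne (ha0 _) hc⟩
  obtain ⟨a, hmax, hc1⟩ := hamax
  by_cases hb : I (a - 1) = I a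
  · -- predecessor also has maximal index
    have hb'lt : I (a - 1 - 1) < I a := by
      have d1 : a - 1 - 1 ≠ a := fun h => h2 (by first | linear_combination h | linear_combination - h)
      have d2 : a ≠ a - 1 - 1 + 1 := fun h => h1 (by first | linear_combination h | linear_combination - h)
      have d3 : a - 1 - 1 ≠ a + 1 := fun h => h3 (by first | linear_combination h | linear_combination - h)
      have hne2 := hNeq (a - 1 - 1) a d1 d2 d3
      have hle := hmax (a - 1 - 1)
      omega
    obtain ⟨x, hx1, hx2⟩ := hadj (a - 1 - 1)
    rw [(by ring : a - 1 - 1 + 1 = a - 1)] at hx2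
    obtain ⟨y, hy1, hy2⟩ := hadj a
    have d1 : a - 1 - 1 ≠ a + 1 := fun h => h3 (by first | linear_combination h | linear_combination - h)
    have d2 : a + 1 ≠ a - 1 - 1 + 1 := fun h => h2 (by first | linear_combination h | linear_combination - h)
    have d3 : a - 1 - 1 ≠ a + 1 + 1 := fun h => h4 (by first | linear_combination h | linear_combination - h)
    have hdd := hdisj (a - 1 - 1) (a + 1) d1 d2 d3
    have hx1b := hW1 _ _ hx1
    have hx2b := hW1 _ _ hx2
    have hy1b := hW1 _ _ hy1
    have hy2b := hW1 _ _ hy2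
    rcases lt_trichotomy (I (a - 1 - 1)) (I (a + 1)) with hlt | heq | hgt
    · have hxg : x ∈ gapSet lc rc (I (a + 1)) := by
        simp only [gapSet, Set.mem_setOf_eq]
        constructor <;> omega
      have hcontra : x ∈ f (a - 1 - 1) ∩ f (a + 1) := ⟨hx1, hW2 _ hxg⟩
      rw [hdd] at hcontra; exact hcontra
    · exact hNeq _ _ d1 d2 d3 heq
    · have hyg : y ∈ gapSet lc rc (I (a - 1 - 1)) := by
        simp only [gapSet, Set.mem_setOf_eq]
        constructor <;> omega
      have hcontra : y ∈ f (a - 1 - 1) ∩ f (a + 1) := ⟨hW2 _ hyg, hy2⟩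
      rw [hdd] at hcontra; exact hcontra
  · have hblt : I (a - 1) < I a := lt_of_le_of_ne (hmax _) hb
    obtain ⟨x, hx1, hx2⟩ := hadj (a - 1)
    rw [(by ring : a - 1 + 1 = a)] at hx2
    obtain ⟨y, hy1, hy2⟩ := hadj a
    have d1 : a - 1 ≠ a + 1 := fun h => h2 (by first | linear_combination h | linear_combination - h)
    have d2 : a + 1 ≠ a - 1 + 1 := fun h => h1 (by first | linear_combination h | linear_combination - h)
    have d3 : a - 1 ≠ a + 1 + 1 := fun h => h3 (by first | linear_combination h | linear_combination - h)
    have hdd := hdisj (a - 1) (a + 1) d1 d2 d3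
    have hx1b := hW1 _ _ hx1
    have hx2b := hW1 _ _ hx2
    have hy1b := hW1 _ _ hy1
    have hy2b := hW1 _ _ hy2
    rcases lt_trichotomy (I (a - 1)) (I (a + 1)) with hlt | heq | hgt
    · have hxg : x ∈ gapSet lc rc (I (a + 1)) := by
        simp only [gapSet, Set.mem_setOf_eq]
        constructor <;> omega
      have hcontra : x ∈ f (a - 1) ∩ f (a + 1) := ⟨hx1, hW2 _ hxg⟩
      rw [hdd] at hcontra; exact hcontra
    · exact hNeq _ _ d1 d2 d3 heq
    · have hyg : y ∈ gapSet lc rc (I (a - 1)) := by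
        simp only [gapSet, Set.mem_setOf_eq]
        constructor <;> omega
      have hcontra : y ∈ f (a - 1) ∩ f (a + 1) := ⟨hW2 _ hyg, hy2⟩
      rw [hdd] at hcontra; exact hcontra

lemma antiAux {α : Type*} {n : ℕ} (hn : 7 ≤ n) (hodd : Odd n) (lc rc : α → ℕ)
    (f : ZMod n → Set α) (I : ZMod n → ℕ)
    (hW1 : ∀ v x, x ∈ f v → lc x ≤ I v ∧ I v ≤ rc x + 1)
    (hW2 : ∀ v, gapSet lc rc (I v) ⊆ f v)
    (hW3 : ∀ v, (gapSet lc rc (I v)).Nonempty)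
    (hdis : ∀ u : ZMod n, f u ∩ f (u + 1) = ∅)
    (hmeet : ∀ u w : ZMod n, u ≠ w → w ≠ u + 1 → u ≠ w + 1 → (f u ∩ f w).Nonempty)
    (a : ZMod n) (hmax : ∀ u, I u ≤ I a) (hside : I (a - 1) ≤ I (a + 1)) : False := by
  haveI : NeZero n := ⟨by omega⟩
  have h1 : (1 : ZMod n) ≠ 0 := by
    have := zmod_k_ne_zero (n := n) (by omega) 1 (by norm_num) (by norm_num); simpa using this
  have h2 : (2 : ZMod n) ≠ 0 := by
    have := zmod_k_ne_zero (n := n) (by omega) 2 (by norm_num) (by norm_num); simpa using this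
  have h3 : (3 : ZMod n) ≠ 0 := by
    have := zmod_k_ne_zero (n := n) (by omega) 3 (by norm_num) (by norm_num); simpa using this
  have h4 : (4 : ZMod n) ≠ 0 := by
    have := zmod_k_ne_zero (n := n) (by omega) 4 (by norm_num) (by norm_num); simpa using this
  -- consecutive indices are distinct
  have hc1 : ∀ u : ZMod n, I u ≠ I (u + 1) := by
    intro u he
    obtain ⟨g, hg⟩ := hW3 u
    have hcontra : g ∈ f u ∩ f (u + 1) := ⟨hW2 u hg, hW2 (u + 1) (he ▸ hg)⟩
    rw [hdis u] at hcontra; exact hcontra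
  -- around any maximal vertex, indices of non-neighbours dominate the neighbours
  have G1 : ∀ b : ZMod n, I b = I a → ∀ u, u ≠ b → u ≠ b + 1 → u ≠ b - 1 →
      I (b - 1) ≤ I u ∧ I (b + 1) ≤ I u := by
    intro b hbM u d1 d2 d3
    have d2' : b ≠ u + 1 := fun h => d3 (by first | linear_combination h | linear_combination - h)
    obtain ⟨x, hx1, hx2⟩ := hmeet u b d1 d2' d2
    have hx1b := hW1 _ _ hx1
    have hx2b := hW1 _ _ hx2
    constructor
    · by_contra hcon
      push_neg at hcon
      have hlt : I (b - 1) < I b := by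
        have hne := hc1 (b - 1)
        rw [(by ring : b - 1 + 1 = b)] at hne
        have := hmax (b - 1)
        omega
      have hxg : x ∈ gapSet lc rc (I (b - 1)) := by
        simp only [gapSet, Set.mem_setOf_eq]
        constructor <;> omega
      have hcontra : x ∈ f (b - 1) ∩ f (b - 1 + 1) :=
        ⟨hW2 _ hxg, by rw [(by ring : b - 1 + 1 = b)]; exact hx2⟩
      rw [hdis (b - 1)] at hcontra; exact hcontra
    · by_contra hcon
      push_neg at hcon
      have hlt : I (b + 1) < I b := by
        have hne := hc1 b
        have := hmax (b + 1)
        omega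
      have hxg : x ∈ gapSet lc rc (I (b + 1)) := by
        simp only [gapSet, Set.mem_setOf_eq]
        constructor <;> omega
      have hcontra : x ∈ f b ∩ f (b + 1) := ⟨hx2, hW2 _ hxg⟩
      rw [hdis b] at hcontra; exact hcontra
  have hμM : I (a - 1) < I a := by
    have hne := hc1 (a - 1)
    rw [(by ring : a - 1 + 1 = a)] at hne
    have := hmax (a - 1)
    omega
  have hνM : I (a + 1) < I a := by
    have hne := hc1 a
    have := hmax (a + 1)
    omega
  -- the predecessor of a is a global minimum
  have hmin : ∀ u, I (a - 1) ≤ I u := by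
    intro u
    by_cases c1 : u = a
    · rw [c1]; exact le_of_lt hμM
    · by_cases c2 : u = a + 1
      · rw [c2]; exact hside
      · by_cases c3 : u = a - 1
        · rw [c3]
        · exact (G1 a rfl u c1 c2 c3).1
  -- T := I (a - 1 - 1)
  have hTν : I (a + 1) ≤ I (a - 1 - 1) := by
    have c1 : a - 1 - 1 ≠ a := fun h => h2 (by first | linear_combination h | linear_combination - h)
    have c2 : a - 1 - 1 ≠ a + 1 := fun h => h3 (by first | linear_combination h | linear_combination - h)
    have c3 : a - 1 - 1 ≠ a - 1 := fun h => h1 (by first | linear_combination h | linear_combination - h)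
    exact (G1 a rfl _ c1 c2 c3).2
  have hμT : I (a - 1) < I (a - 1 - 1) := by
    have hne := hc1 (a - 1 - 1)
    rw [(by ring : a - 1 - 1 + 1 = a - 1)] at hne
    have := hmin (a - 1 - 1)
    omega
  -- G2 : everything except a-1-1, a-1, a has index at most T
  have G2 : ∀ u : ZMod n, u ≠ a - 1 → u ≠ a → u ≠ a - 1 - 1 → I u ≤ I (a - 1 - 1) := by
    intro u d1 d2 d3
    by_contra hcon
    push_neg at hcon
    have d2' : a - 1 ≠ u + 1 := fun h => d3 (by first | linear_combination h | linear_combination - h)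
    have d3' : u ≠ a - 1 + 1 := fun h => d2 (by first | linear_combination h | linear_combination - h)
    obtain ⟨y, hy1, hy2⟩ := hmeet u (a - 1) d1 d2' d3'
    have hy1b := hW1 _ _ hy1
    have hy2b := hW1 _ _ hy2
    have hyg : y ∈ gapSet lc rc (I (a - 1 - 1)) := by
      simp only [gapSet, Set.mem_setOf_eq]
      constructor <;> omega
    have hcontra : y ∈ f (a - 1 - 1) ∩ f (a - 1 - 1 + 1) :=
      ⟨hW2 _ hyg, by rw [(by ring : a - 1 - 1 + 1 = a - 1)]; exact hy2⟩
    rw [hdis (a - 1 - 1)] at hcontra; exact hcontra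
  by_cases hTM : I (a - 1 - 1) = I a
  · -- propagation of maxima two steps at a time, contradiction by parity
    have step : ∀ b : ZMod n, I b = I a → I (b + 1 + 1) = I a → I (b + 1 + 1 + 1 + 1) = I a := by
      intro b hb0 hb2
      have hβ : I (b + 1 + 1 + 1) < I a := by
        have hne := hc1 (b + 1 + 1)
        have := hmax (b + 1 + 1 + 1)
        omega
      have c1 : b + 1 + 1 + 1 + 1 ≠ b + 1 + 1 := fun h => h2 (by first | linear_combination h | linear_combination - h)
      have c2 : b + 1 + 1 + 1 + 1 ≠ b + 1 + 1 + 1 := fun h => h1 (by first | linear_combination h | linear_combination - h)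
      have c3 : b + 1 + 1 + 1 + 1 ≠ b + 1 + 1 - 1 := fun h => h3 (by first | linear_combination h | linear_combination - h)
      have hG := (G1 (b + 1 + 1) hb2 (b + 1 + 1 + 1 + 1) c1 c2 c3).2
      have hne2 := hc1 (b + 1 + 1 + 1)
      by_contra hcon
      have hlt : I (b + 1 + 1 + 1 + 1) < I a := lt_of_le_of_ne (hmax _) hcon
      have d1 : b ≠ b + 1 + 1 + 1 := fun h => h3 (by first | linear_combination h | linear_combination - h)
      have d2 : b + 1 + 1 + 1 ≠ b + 1 := fun h => h2 (by first | linear_combination h | linear_combination - h)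
      have d3 : b ≠ b + 1 + 1 + 1 + 1 := fun h => h4 (by first | linear_combination h | linear_combination - h)
      obtain ⟨x, hx1, hx2⟩ := hmeet b (b + 1 + 1 + 1) d1 d2 d3
      have hx1b := hW1 _ _ hx1
      have hx2b := hW1 _ _ hx2
      have hxg : x ∈ gapSet lc rc (I (b + 1 + 1 + 1 + 1)) := by
        simp only [gapSet, Set.mem_setOf_eq]
        constructor <;> omega
      have hcontra : x ∈ f (b + 1 + 1 + 1) ∩ f (b + 1 + 1 + 1 + 1) := ⟨hx2, hW2 _ hxg⟩
      rw [hdis (b + 1 + 1 + 1)] at hcontra; exact hcontra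
    have iter : ∀ k : ℕ, I (a - 1 - 1 + ((2 * k : ℕ) : ZMod n)) = I a
        ∧ I (a - 1 - 1 + ((2 * (k + 1) : ℕ) : ZMod n)) = I a := by
      intro k
      induction k with
      | zero =>
        constructor
        · simpa using hTM
        · have e : a - 1 - 1 + ((2 * (0 + 1) : ℕ) : ZMod n) = a := by push_cast; ring
          rw [e]
        -- note : I a = I a
      | succ k ih =>
        refine ⟨ih.2, ?_⟩
        have e2 : (a - 1 - 1 + ((2 * k : ℕ) : ZMod n)) + 1 + 1
            = a - 1 - 1 + ((2 * (k + 1) : ℕ) : ZMod n) := by push_cast; ring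
        have h2' : I ((a - 1 - 1 + ((2 * k : ℕ) : ZMod n)) + 1 + 1) = I a := by
          rw [e2]; exact ih.2
        have hs := step (a - 1 - 1 + ((2 * k : ℕ) : ZMod n)) ih.1 h2'
        have e3 : (a - 1 - 1 + ((2 * k : ℕ) : ZMod n)) + 1 + 1 + 1 + 1
            = a - 1 - 1 + ((2 * (k + 1 + 1) : ℕ) : ZMod n) := by push_cast; ring
        rw [e3] at hs
        exact hs
    obtain ⟨t, ht⟩ := hodd
    have hk : (2 * (t + 2) : ℕ) = n + 3 := by omega
    have hfin := (iter (t + 2)).1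
    have e : a - 1 - 1 + ((2 * (t + 2) : ℕ) : ZMod n) = a + 1 := by
      rw [hk]
      push_cast [ZMod.natCast_self]
      ring
    rw [e] at hfin
    omega
  · -- T < M : immediate contradiction
    have hTM' : I (a - 1 - 1) < I a := lt_of_le_of_ne (hmax _) hTM
    have h3T : I (a - 1 - 1 - 1) < I (a - 1 - 1) := by
      have c1 : a - 1 - 1 - 1 ≠ a - 1 := fun h => h2 (by first | linear_combination h | linear_combination - h)
      have c2 : a - 1 - 1 - 1 ≠ a := fun h => h3 (by first | linear_combination h | linear_combination - h)
      have c3 : a - 1 - 1 - 1 ≠ a - 1 - 1 := fun h => h1 (by first | linear_combination h | linear_combination - h)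
      have hle := G2 (a - 1 - 1 - 1) c1 c2 c3
      have hne := hc1 (a - 1 - 1 - 1)
      rw [(by ring : a - 1 - 1 - 1 + 1 = a - 1 - 1)] at hne
      omega
    have d1 : a - 1 - 1 - 1 ≠ a := fun h => h3 (by first | linear_combination h | linear_combination - h)
    have d2 : a ≠ a - 1 - 1 - 1 + 1 := fun h => h2 (by first | linear_combination h | linear_combination - h)
    have d3 : a - 1 - 1 - 1 ≠ a + 1 := fun h => h4 (by first | linear_combination h | linear_combination - h)
    obtain ⟨x, hx1, hx2⟩ := hmeet (a - 1 - 1 - 1) a d1 d2 d3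
    have hx1b := hW1 _ _ hx1
    have hx2b := hW1 _ _ hx2
    have hxg : x ∈ gapSet lc rc (I (a - 1 - 1)) := by
      simp only [gapSet, Set.mem_setOf_eq]
      constructor <;> omega
    have hcontra : x ∈ f (a - 1 - 1 - 1) ∩ f (a - 1 - 1 - 1 + 1) :=
      ⟨hx1, by rw [(by ring : a - 1 - 1 - 1 + 1 = a - 1 - 1)]; exact hW2 _ hxg⟩
    rw [hdis (a - 1 - 1 - 1)] at hcontra; exact hcontra

/-- The Hilbert extender graph of an interval order is Berge: it contains no odd hole of
length at least 5 and no odd antihole of size at least 7. -/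
theorem stmt_18 {α : Type*} [Fintype α] [PartialOrder α] (m : ℕ) (lc rc : α → ℕ)
    (hclr : ∀ x, lc x ≤ rc x) (hcrep : ∀ x y : α, x < y ↔ rc x + 1 ≤ lc y)
    (hcm : ∀ x, rc x < m) (hcan : ∀ i < m, (∃ x, lc x = i) ∧ (∃ x, rc x = i))
    (n : ℕ) (hodd : Odd n) :
    (5 ≤ n → ¬ ∃ f : ZMod n → Set α,
      (∀ v, HilbertSet m lc rc (f v)) ∧ Function.Injective f ∧
      ∀ i j : ZMod n, i ≠ j →
        ((f i ∩ f j).Nonempty ↔ (j = i + 1 ∨ i = j + 1))) ∧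
    (7 ≤ n → ¬ ∃ f : ZMod n → Set α,
      (∀ v, HilbertSet m lc rc (f v)) ∧ Function.Injective f ∧
      ∀ i j : ZMod n, i ≠ j →
        ((f i ∩ f j).Nonempty ↔ ¬ (j = i + 1 ∨ i = j + 1))) := by
  classical
  constructor
  · -- no odd hole
    intro hn5
    rintro ⟨f, hsets, hinj, hcond⟩
    haveI : NeZero n := ⟨by omega⟩
    have h1 : (1 : ZMod n) ≠ 0 := by
      have := zmod_k_ne_zero (n := n) (by omega) 1 (by norm_num) (by norm_num)
      simpa using this
    have h2 : (2 : ZMod n) ≠ 0 := by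
      have := zmod_k_ne_zero (n := n) (by omega) 2 (by norm_num) (by norm_num)
      simpa using this
    have h3 : (3 : ZMod n) ≠ 0 := by
      have := zmod_k_ne_zero (n := n) (by omega) 3 (by norm_num) (by norm_num)
      simpa using this
    have hFE : ∀ v, FundExt m lc rc (f v) := fun v => (hsets v).1
    set I : ZMod n → ℕ := fun v => (hFE v).2.choose with hI
    have hspec : ∀ v, I v ≤ m ∧ ∃ Z, (Z ⊆ leftBorder rc (I v) ∨ Z ⊆ rightBorder lc (I v))
        ∧ f v = gapSet lc rc (I v) ∪ Z := fun v => (hFE v).2.choose_spec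
    have hZspec : ∀ v, ((hspec v).2.choose ⊆ leftBorder rc (I v)
        ∨ (hspec v).2.choose ⊆ rightBorder lc (I v))
        ∧ f v = gapSet lc rc (I v) ∪ (hspec v).2.choose := fun v => (hspec v).2.choose_spec
    have hadj : ∀ u : ZMod n, (f u ∩ f (u + 1)).Nonempty := by
      intro u
      have hne : u ≠ u + 1 := fun h => h1 (by first | linear_combination h | linear_combination - h)
      exact (hcond u (u + 1) hne).2 (Or.inl rfl)
    have hdisj : ∀ u w : ZMod n, u ≠ w → w ≠ u + 1 → u ≠ w + 1 → f u ∩ f w = ∅ := by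
      intro u w d1 d2 d3
      rw [← Set.not_nonempty_iff_eq_empty]
      intro hne
      rcases (hcond u w d1).1 hne with h | h
      · exact d2 h
      · exact d3 h
    have hW1 : ∀ v x, x ∈ f v → lc x ≤ I v ∧ I v ≤ rc x + 1 := by
      intro v x hx
      rw [(hZspec v).2] at hx
      rcases hx with hg | hz
      · simp only [gapSet, Set.mem_setOf_eq] at hg; omega
      · rcases (hZspec v).1 with hL | hR
        · have hb : rc x + 1 = I v := hL hz
          have := hclr x; omega
        · have hb : lc x = I v := hR hz
          have := hclr x; omega
    have hW2 : ∀ v, gapSet lc rc (I v) ⊆ f v := fun v => by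
      rw [(hZspec v).2]; exact Set.subset_union_left
    have hW3 : ∀ v, (gapSet lc rc (I v)).Nonempty := by
      intro v
      rw [Set.nonempty_iff_ne_empty]
      intro hemp
      have hss : (f v).Subsingleton := hilbert_gap_subsingleton m lc rc hclr hcrep hcm hcan
        (hsets v) (hspec v).1 (hZspec v).1 (hZspec v).2 hemp
      obtain ⟨x, hx1, hx2⟩ := hadj (v - 1)
      rw [(by ring : v - 1 + 1 = v)] at hx2
      obtain ⟨y, hy1, hy2⟩ := hadj v
      have hxy : x = y := hss hx2 hy1
      have d1 : v - 1 ≠ v + 1 := fun h => h2 (by first | linear_combination h | linear_combination - h)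
      have d2 : v + 1 ≠ v - 1 + 1 := fun h => h1 (by first | linear_combination h | linear_combination - h)
      have d3 : v - 1 ≠ v + 1 + 1 := fun h => h3 (by first | linear_combination h | linear_combination - h)
      have hdd := hdisj (v - 1) (v + 1) d1 d2 d3
      have hcontra : x ∈ f (v - 1) ∩ f (v + 1) := ⟨hx1, hxy ▸ hy2⟩
      rw [hdd] at hcontra; exact hcontra
    exact holeAux hn5 lc rc f I hW1 hW2 hW3 hadj hdisj
  · -- no odd antihole
    intro hn7
    rintro ⟨f, hsets, hinj, hcond⟩
    haveI : NeZero n := ⟨by omega⟩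
    have h1 : (1 : ZMod n) ≠ 0 := by
      have := zmod_k_ne_zero (n := n) (by omega) 1 (by norm_num) (by norm_num)
      simpa using this
    have h2 : (2 : ZMod n) ≠ 0 := by
      have := zmod_k_ne_zero (n := n) (by omega) 2 (by norm_num) (by norm_num)
      simpa using this
    have h3 : (3 : ZMod n) ≠ 0 := by
      have := zmod_k_ne_zero (n := n) (by omega) 3 (by norm_num) (by norm_num)
      simpa using this
    have h4 : (4 : ZMod n) ≠ 0 := by
      have := zmod_k_ne_zero (n := n) (by omega) 4 (by norm_num) (by norm_num)
      simpa using this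
    have hFE : ∀ v, FundExt m lc rc (f v) := fun v => (hsets v).1
    set I : ZMod n → ℕ := fun v => (hFE v).2.choose with hI
    have hspec : ∀ v, I v ≤ m ∧ ∃ Z, (Z ⊆ leftBorder rc (I v) ∨ Z ⊆ rightBorder lc (I v))
        ∧ f v = gapSet lc rc (I v) ∪ Z := fun v => (hFE v).2.choose_spec
    have hZspec : ∀ v, ((hspec v).2.choose ⊆ leftBorder rc (I v)
        ∨ (hspec v).2.choose ⊆ rightBorder lc (I v))
        ∧ f v = gapSet lc rc (I v) ∪ (hspec v).2.choose := fun v => (hspec v).2.choose_spec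
    have hdis : ∀ u : ZMod n, f u ∩ f (u + 1) = ∅ := by
      intro u
      rw [← Set.not_nonempty_iff_eq_empty]
      intro hne
      have hne' : u ≠ u + 1 := fun h => h1 (by first | linear_combination h | linear_combination - h)
      exact ((hcond u (u + 1) hne').1 hne) (Or.inl rfl)
    have hmeet : ∀ u w : ZMod n, u ≠ w → w ≠ u + 1 → u ≠ w + 1 → (f u ∩ f w).Nonempty :=
      fun u w d1 d2 d3 => (hcond u w d1).2 (not_or.mpr ⟨d2, d3⟩)
    have hW1 : ∀ v x, x ∈ f v → lc x ≤ I v ∧ I v ≤ rc x + 1 := by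
      intro v x hx
      rw [(hZspec v).2] at hx
      rcases hx with hg | hz
      · simp only [gapSet, Set.mem_setOf_eq] at hg; omega
      · rcases (hZspec v).1 with hL | hR
        · have hb : rc x + 1 = I v := hL hz
          have := hclr x; omega
        · have hb : lc x = I v := hR hz
          have := hclr x; omega
    have hW2 : ∀ v, gapSet lc rc (I v) ⊆ f v := fun v => by
      rw [(hZspec v).2]; exact Set.subset_union_left
    have hW3 : ∀ v, (gapSet lc rc (I v)).Nonempty := by
      intro v
      rw [Set.nonempty_iff_ne_empty]
      intro hemp
      have hss : (f v).Subsingleton := hilbert_gap_subsingleton m lc rc hclr hcrep hcm hcan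
        (hsets v) (hspec v).1 (hZspec v).1 (hZspec v).2 hemp
      have d1 : v ≠ v + 1 + 1 := fun h => h2 (by first | linear_combination h | linear_combination - h)
      have d2 : v + 1 + 1 ≠ v + 1 := fun h => h1 (by first | linear_combination h | linear_combination - h)
      have d3 : v ≠ v + 1 + 1 + 1 := fun h => h3 (by first | linear_combination h | linear_combination - h)
      obtain ⟨x, hx1, hx2⟩ := hmeet v (v + 1 + 1) d1 d2 d3
      have e1 : v ≠ v + 1 + 1 + 1 := d3
      have e2 : v + 1 + 1 + 1 ≠ v + 1 := fun h => h2 (by first | linear_combination h | linear_combination - h)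
      have e3 : v ≠ v + 1 + 1 + 1 + 1 := fun h => h4 (by first | linear_combination h | linear_combination - h)
      obtain ⟨y, hy1, hy2⟩ := hmeet v (v + 1 + 1 + 1) e1 e2 e3
      have hxy : x = y := hss hx1 hy1
      have hcontra : x ∈ f (v + 1 + 1) ∩ f (v + 1 + 1 + 1) := ⟨hx2, hxy ▸ hy2⟩
      rw [hdis (v + 1 + 1)] at hcontra; exact hcontra
    have hnem : Nonempty (ZMod n) := ⟨0⟩
    obtain ⟨a, hmaxa⟩ := Finite.exists_max I
    by_cases hcase : I (a - 1) ≤ I (a + 1)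
    · exact antiAux hn7 hodd lc rc f I hW1 hW2 hW3 hdis hmeet a hmaxa hcase
    · refine antiAux hn7 hodd lc rc (fun v => f (a + a - v)) (fun v => I (a + a - v))
        (fun v x hx => hW1 _ _ hx) (fun v => hW2 _) (fun v => hW3 _) ?_ ?_ a ?_ ?_
      · intro u
        have h0 := hdis (a + a - u - 1)
        rw [(by ring : a + a - u - 1 + 1 = a + a - u)] at h0
        show f (a + a - u) ∩ f (a + a - (u + 1)) = ∅
        rw [(by ring : a + a - (u + 1) = a + a - u - 1), Set.inter_comm]
        exact h0
      · intro u w d1 d2 d3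
        show (f (a + a - u) ∩ f (a + a - w)).Nonempty
        refine hmeet _ _ ?_ ?_ ?_
        · exact fun h => d1 (by first | linear_combination h | linear_combination - h)
        · exact fun h => d3 (by first | linear_combination h | linear_combination - h)
        · exact fun h => d2 (by first | linear_combination h | linear_combination - h)
      · intro u
        show I (a + a - u) ≤ I (a + a - a)
        rw [(by ring : a + a - a = a)]
        exact hmaxa _
      · show I (a + a - (a - 1)) ≤ I (a + a - (a + 1))
        rw [(by ring : a + a - (a - 1) = a + 1), (by ring : a + a - (a + 1) = a - 1)]
        exact le_of_lt (not_le.mp hcase)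
end
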